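/- Let ξ : ℝ³ → ℝ be three times continuously differentiable, and let c > 0 and M ≥ 0 be constants such that D²ξ(x)[ζ,ζ] ≥ c|ζ|² for all x, ζ ∈ ℝ³ and |D³ξ(x)[ζ,ζ,ζ]| ≤ M|ζ|³ for all x with ξ(x) ≤ 0 and all ζ ∈ ℝ³. Then for every x ∈ ℝ³ with ξ(x) ≤ 0 and every v ∈ ℝ³, the derivative at s = 0 of the function s ↦ α(x + s v, v) is bounded in absolute value by (M/c)|v| · α(x,v). -/

import Mathlib

/-!
Along the line `s ↦ x + s • v`, write `f(s) = ξ(x + s v)`. Then `α(x + s v, v) = f'² − 2 f'' f`,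
whose derivative telescopes to `−2 f''' f`. At `s = 0` we have `|f'''| ≤ M |v|³`,
while `α ≥ −2 f'' f ≥ 2 c |v|² |ξ(x)|` because `ξ(x) ≤ 0`; the quotient of the two is `(M/c)|v|`.
-/

noncomputable section

open Real

/-- Euclidean 3-space. -/
abbrev E3 : Type := EuclideanSpace ℝ (Fin 3)

/-- Kinetic distance toward the grazing set:
`α(x,v) = (∇ξ(x)·v)² − 2 (D²ξ(x)[v,v]) ξ(x)`. -/
def kineticAlpha (ξ : E3 → ℝ) (x v : E3) : ℝ :=
  (fderiv ℝ ξ x v) ^ 2 - 2 * (iteratedFDeriv ℝ 2 ξ x ![v, v]) * ξ x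

theorem hasDerivAt_iteratedFDeriv_line {E F : Type*} [NormedAddCommGroup E] [NormedSpace ℝ E]
    [NormedAddCommGroup F] [NormedSpace ℝ F] {f : E → F} {n : ℕ} {x v : E} {t : ℝ}
    (hf : DifferentiableAt ℝ (iteratedFDeriv ℝ n f) (x + t • v)) :
    HasDerivAt (fun s : ℝ => iteratedFDeriv ℝ n f (x + s • v) (fun _ => v))
      (iteratedFDeriv ℝ (n + 1) f (x + t • v) (fun _ => v)) t := by
  have hline : HasDerivAt (fun s : ℝ => x + s • v) v t := by
    simpa using ((hasDerivAt_id t).smul_const v).const_add x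
  let evalAtV := ContinuousMultilinearMap.apply ℝ (fun _ : Fin n => E) F fun _ => v
  rw [iteratedFDeriv_succ_apply_left]
  exact (evalAtV.hasFDerivAt.comp _ hf.hasFDerivAt).comp_hasDerivAt t hline

theorem HasDerivAt.sq_sub_two_mul_mul {f₀ f₁ f₂ : ℝ → ℝ} {f₃ t : ℝ}
    (h₀ : HasDerivAt f₀ (f₁ t) t) (h₁ : HasDerivAt f₁ (f₂ t) t) (h₂ : HasDerivAt f₂ f₃ t) :
    HasDerivAt (fun s => f₁ s ^ 2 - 2 * f₂ s * f₀ s) (-2 * f₃ * f₀ t) t :=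
  ((h₁.pow 2).sub ((h₂.const_mul 2).mul h₀)).congr_deriv (by push_cast; ring)

theorem kineticAlpha_eq_iteratedFDeriv (ξ : E3 → ℝ) (y v : E3) :
    kineticAlpha ξ y v = iteratedFDeriv ℝ 1 ξ y (fun _ => v) ^ 2
      - 2 * iteratedFDeriv ℝ 2 ξ y (fun _ => v) * iteratedFDeriv ℝ 0 ξ y (fun _ => v) := by
  have hvv : (![v, v] : Fin 2 → E3) = fun _ => v := by
    funext i; fin_cases i <;> rfl
  rw [kineticAlpha, iteratedFDeriv_one_apply, iteratedFDeriv_zero_apply, hvv]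

theorem hasDerivAt_kineticAlpha_line {ξ : E3 → ℝ} (hξ : ContDiff ℝ 3 ξ) (x v : E3) (t : ℝ) :
    HasDerivAt (fun s : ℝ => kineticAlpha ξ (x + s • v) v)
      (-2 * iteratedFDeriv ℝ 3 ξ (x + t • v) ![v, v, v] * ξ (x + t • v)) t := by
  have hdiff (n : ℕ) (hn : n < 3) := (hξ.differentiable_iteratedFDeriv (m := n)
    (by exact_mod_cast hn)).differentiableAt (x := x + t • v)
  have hvvv : (![v, v, v] : Fin 3 → E3) = fun _ => v := by
    funext i; fin_cases i <;> rfl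
  simp_rw [kineticAlpha_eq_iteratedFDeriv, hvvv]
  rw [← iteratedFDeriv_zero_apply (𝕜 := ℝ) (f := ξ) (x := x + t • v) (fun _ => v)]
  exact HasDerivAt.sq_sub_two_mul_mul (hasDerivAt_iteratedFDeriv_line (hdiff 0 (by norm_num)))
    (hasDerivAt_iteratedFDeriv_line (hdiff 1 (by norm_num)))
    (hasDerivAt_iteratedFDeriv_line (hdiff 2 (by norm_num)))

theorem two_mul_mul_neg_le_kineticAlpha {ξ : E3 → ℝ} {x v : E3} {c : ℝ} (hx : ξ x ≤ 0)
    (hconv : c * ‖v‖ ^ 2 ≤ iteratedFDeriv ℝ 2 ξ x ![v, v]) :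
    2 * (c * ‖v‖ ^ 2) * -ξ x ≤ kineticAlpha ξ x v := by
  rw [kineticAlpha]
  nlinarith [sq_nonneg (fderiv ℝ ξ x v), mul_le_mul_of_nonneg_right hconv (neg_nonneg.2 hx)]

/-- The differential inequality `|v·∇ₓα| ≤ (M/c)|v| α` underlying the Velocity Lemma. -/
theorem kineticAlpha_transport_deriv_bound
    (ξ : E3 → ℝ) (hξ : ContDiff ℝ 3 ξ)
    (c M : ℝ) (hc : 0 < c) (hM : 0 ≤ M)
    (hconv : ∀ x ζ : E3, c * ‖ζ‖ ^ 2 ≤ iteratedFDeriv ℝ 2 ξ x ![ζ, ζ])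
    (hthird : ∀ x ζ : E3, ξ x ≤ 0 → |iteratedFDeriv ℝ 3 ξ x ![ζ, ζ, ζ]| ≤ M * ‖ζ‖ ^ 3)
    (x v : E3) (hx : ξ x ≤ 0) :
    |deriv (fun s : ℝ => kineticAlpha ξ (x + s • v) v) 0|
      ≤ M / c * ‖v‖ * kineticAlpha ξ x v := by
  have hderiv := (hasDerivAt_kineticAlpha_line hξ x v 0).deriv
  simp only [zero_smul, add_zero] at hderiv
  rw [hderiv]
  have hneg : 0 ≤ -ξ x := neg_nonneg.2 hx
  calc |-2 * iteratedFDeriv ℝ 3 ξ x ![v, v, v] * ξ x|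
      = 2 * |iteratedFDeriv ℝ 3 ξ x ![v, v, v]| * -ξ x := by
        rw [abs_mul, abs_mul, abs_of_nonpos hx]; norm_num
    _ ≤ 2 * (M * ‖v‖ ^ 3) * -ξ x := by gcongr; exact hthird x v hx
    _ = M / c * ‖v‖ * (2 * (c * ‖v‖ ^ 2) * -ξ x) := by field_simp
    _ ≤ M / c * ‖v‖ * kineticAlpha ξ x v := by
        gcongr
        exact two_mul_mul_neg_le_kineticAlpha hx (hconv x v)
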